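/- arXiv:2505.14860 — 3 statements merged into one kernel-verified Lean document; each statement's English description precedes it below -/
import Mathlib

section
/- Let 𝕂 be ℝ or ℂ and let r = (r_1,…,r_n) be a vector of positive reals. The set PF_d(r) of d×n Parseval frames over 𝕂 with squared column norms prescribed by r is nonempty if and only if r is admissible, i.e. Σ_{i=1}^n r_i = d and Σ_{i=1}^k r_(i) ≤ k for all 1 ≤ k ≤ d−1. -/
open scoped BigOperators Matrix

/-- `r` is admissible: the entries sum to `d` and the sum of the `k` largest entries is
at most `k` for all `1 ≤ k ≤ d-1`.  (The sum of the `k` largest entries is at most `k`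
iff the sum over every `k`-element index set is at most `k`.) -/
def AdmissibleR (d n : ℕ) (r : Fin n → ℝ) : Prop :=
  (∑ i, r i = d) ∧
    ∀ k : ℕ, 1 ≤ k → k ≤ d - 1 →
      ∀ I : Finset (Fin n), I.card = k → ∑ i ∈ I, r i ≤ k


lemma sum_split_one {ι M : Type*} [Fintype ι] [DecidableEq ι] [AddCommMonoid M]
    (j : ι) (f : ι → M) : ∑ m, f m = f j + ∑ m : {m // m ≠ j}, f m := by
  rw [← Finset.sum_subtype (p := (· ≠ j)) (Finset.univ.erase j) (by simp) f]
  exact (Finset.univ.add_sum_erase f (Finset.mem_univ j)).symm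

lemma sum_split_two {ι M : Type*} [Fintype ι] [DecidableEq ι] [AddCommMonoid M]
    (i j : ι) (hij : i ≠ j) (f : ι → M) :
    ∑ m, f m = f i + f j + ∑ m ∈ Finset.univ \ {i, j}, f m := by
  have h := Finset.sum_sdiff (s₁ := ({i, j} : Finset ι)) (Finset.subset_univ _) (f := f)
  rw [Finset.sum_pair hij] at h
  rw [← h]; abel

lemma card_ne {ι : Type*} [Fintype ι] [DecidableEq ι] (j : ι) :
    Fintype.card {m : ι // m ≠ j} = Fintype.card ι - 1 := by
  simp [Fintype.card_subtype_compl (· = j) (α := ι), Fintype.card_subtype_eq]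

lemma rotate_cols {ιd ιn : Type*} [Fintype ιd] [DecidableEq ιd] [Fintype ιn] [DecidableEq ιn]
    (i j : ιn) (hij : i ≠ j) (F : Matrix ιd ιn ℝ) (hF : F * F.transpose = 1)
    {a b t : ℝ} (ha : ∑ k, (F k i) ^ 2 = a) (hb : ∑ k, (F k j) ^ 2 = b)
    (hbt : b ≤ t) (hta : t ≤ a) :
    ∃ G : Matrix ιd ιn ℝ, G * G.transpose = 1 ∧ (∑ k, (G k i) ^ 2 = t) ∧
      (∑ k, (G k j) ^ 2 = a + b - t) ∧ ∀ m, m ≠ i → m ≠ j → ∀ k, G k m = F k m := by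
  set γ : ℝ := ∑ k, F k i * F k j with hγ
  set h : ℝ → ℝ := fun θ => (Real.cos θ) ^ 2 * a + (2 * Real.cos θ * Real.sin θ) * γ
      + (Real.sin θ) ^ 2 * b with hh
  have hcont : Continuous h := by fun_prop
  have h0 : h 0 = a := by simp [hh]
  have hpi : h (Real.pi / 2) = b := by simp [hh]
  have hmem : t ∈ Set.Icc (h (Real.pi / 2)) (h 0) := by rw [h0, hpi]; exact ⟨hbt, hta⟩
  have hivt := intermediate_value_Icc' (a := 0) (b := Real.pi / 2)
      (by positivity) hcont.continuousOn hmem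
  obtain ⟨θ, -, hθ⟩ := hivt
  set c := Real.cos θ with hc
  set s := Real.sin θ with hs
  have hcs : s ^ 2 + c ^ 2 = 1 := Real.sin_sq_add_cos_sq θ
  have hti : h θ = t := hθ
  have htx : c ^ 2 * a + (2 * c * s) * γ + s ^ 2 * b = t := hti
  refine ⟨Matrix.of fun k m => if m = i then c * F k i + s * F k j
      else if m = j then -s * F k i + c * F k j else F k m, ?_, ?_, ?_, ?_⟩
  · ext k l
    rw [← hF]
    simp only [Matrix.mul_apply, Matrix.transpose_apply, Matrix.of_apply]
    rw [sum_split_two i j hij, sum_split_two i j hij (f := fun m => F k m * F l m)]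
    have htail : ∀ m ∈ Finset.univ \ ({i, j} : Finset ιn),
        ((if m = i then c * F k i + s * F k j else if m = j then -s * F k i + c * F k j
          else F k m) * (if m = i then c * F l i + s * F l j
            else if m = j then -s * F l i + c * F l j else F l m)) = F k m * F l m := by
      intro m hm
      simp only [Finset.mem_sdiff, Finset.mem_insert, Finset.mem_singleton, not_or] at hm
      simp [hm.2.1, hm.2.2]
    rw [Finset.sum_congr rfl htail]
    simp only [eq_self_iff_true, if_true, if_neg hij, if_neg (Ne.symm hij)]
    have key : (c * F k i + s * F k j) * (c * F l i + s * F l j)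
        + (-s * F k i + c * F k j) * (-s * F l i + c * F l j)
        = F k i * F l i + F k j * F l j := by
      linear_combination (F k i * F l i + F k j * F l j) * hcs
    linarith [key]
  · have e : ∀ x : ιd, (c * F x i + s * F x j) ^ 2
        = c ^ 2 * (F x i) ^ 2 + (2 * c * s) * (F x i * F x j) + s ^ 2 * (F x j) ^ 2 := by
      intro x; ring
    simp only [Matrix.of_apply, if_true]
    rw [Finset.sum_congr rfl fun x _ => e x]
    rw [Finset.sum_add_distrib, Finset.sum_add_distrib, ← Finset.mul_sum, ← Finset.mul_sum,
      ← Finset.mul_sum, ha, hb, ← hγ]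
    exact htx
  · have e : ∀ x : ιd, (if j = i then c * F x i + s * F x j
        else -s * F x i + c * F x j) ^ 2
        = s ^ 2 * (F x i) ^ 2 - (2 * c * s) * (F x i * F x j) + c ^ 2 * (F x j) ^ 2 := by
      intro x; rw [if_neg (Ne.symm hij)]; ring
    simp only [Matrix.of_apply, if_true]
    rw [Finset.sum_congr rfl fun x _ => e x]
    rw [Finset.sum_add_distrib, Finset.sum_sub_distrib, ← Finset.mul_sum, ← Finset.mul_sum,
      ← Finset.mul_sum, ha, hb, ← hγ]
    linear_combination (a + b) * hcs - htx
  · intro m hmi hmj k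
    simp [Matrix.of_apply, hmi, hmj]

lemma extend_unit {ιd ιn : Type*} [Fintype ιd] [DecidableEq ιd] [Fintype ιn] [DecidableEq ιn]
    (i₀ : ιd) (j : ιn) (F' : Matrix {k : ιd // k ≠ i₀} {m : ιn // m ≠ j} ℝ)
    (hF' : F' * F'.transpose = 1) :
    ∃ F : Matrix ιd ιn ℝ, F * F.transpose = 1 ∧ (∑ k, (F k j) ^ 2 = 1) ∧
      ∀ m : {m : ιn // m ≠ j}, ∑ k, (F k (↑m : ιn)) ^ 2 = ∑ k, (F' k m) ^ 2 := by
  classical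
  set F : Matrix ιd ιn ℝ := Matrix.of fun k m =>
      if hm : m = j then (if k = i₀ then 1 else 0)
      else if hk : k = i₀ then 0 else F' ⟨k, hk⟩ ⟨m, hm⟩ with hFdef
  have hFj : ∀ k, F k j = if k = i₀ then 1 else 0 := fun k => dif_pos rfl
  have hFm : ∀ (k : ιd) (m : ιn) (hm : m ≠ j),
      F k m = if hk : k = i₀ then 0 else F' ⟨k, hk⟩ ⟨m, hm⟩ := fun k m hm => dif_neg hm
  have hFm0 : ∀ (m : ιn) (hm : m ≠ j), F i₀ m = 0 := fun m hm => by
    rw [hFm i₀ m hm, dif_pos rfl]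
  have hFmk : ∀ (k : {k : ιd // k ≠ i₀}) (m : ιn) (hm : m ≠ j),
      F (↑k) m = F' k ⟨m, hm⟩ := fun k m hm => by
    rw [hFm (↑k) m hm, dif_neg k.prop]
  refine ⟨F, ?_, ?_, ?_⟩
  · ext k l
    rw [Matrix.mul_apply]
    simp only [Matrix.transpose_apply]
    rw [sum_split_one j (f := fun m => F k m * F l m)]
    rw [Finset.sum_congr rfl fun (m : {m : ιn // m ≠ j}) _ => by
      rw [hFm k (↑m) m.prop, hFm l (↑m) m.prop]]
    rw [hFj k, hFj l]
    by_cases hk : k = i₀ <;> by_cases hl : l = i₀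
    · simp only [if_pos hk, if_pos hl, dif_pos hk, dif_pos hl]
      have : k = l := hk.trans hl.symm
      simp [Matrix.one_apply, this]
    · have hkl : k ≠ l := fun h => hl (h ▸ hk)
      simp only [if_pos hk, if_neg hl, dif_pos hk, dif_neg hl]
      simp [Matrix.one_apply, hkl]
    · have hkl : k ≠ l := fun h => hk (h ▸ hl)
      simp only [if_neg hk, if_pos hl, dif_neg hk, dif_pos hl]
      simp [Matrix.one_apply, hkl]
    · simp only [if_neg hk, if_neg hl, dif_neg hk, dif_neg hl]
      have h2 := congrFun (congrFun hF' ⟨k, hk⟩) ⟨l, hl⟩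
      rw [Matrix.mul_apply] at h2
      simp only [Matrix.transpose_apply] at h2
      rw [zero_mul, zero_add, h2]
      simp [Matrix.one_apply, Subtype.ext_iff]
  · rw [Finset.sum_congr rfl fun k _ => by rw [hFj k]]
    have : ∀ k : ιd, (if k = i₀ then (1:ℝ) else 0) ^ 2 = if k = i₀ then 1 else 0 := by
      intro k; split <;> norm_num
    rw [Finset.sum_congr rfl fun k _ => this k]
    simp
  · intro m
    rw [sum_split_one i₀ (f := fun k => F k (↑m) ^ 2), hFm0 (↑m) m.prop]
    rw [Finset.sum_congr rfl fun (k : {k : ιd // k ≠ i₀}) _ => by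
      rw [hFmk k (↑m) m.prop]]
    norm_num

lemma extend_zero {ιd ιn : Type*} [Fintype ιd] [DecidableEq ιd] [Fintype ιn] [DecidableEq ιn]
    (j : ιn) (F' : Matrix ιd {m : ιn // m ≠ j} ℝ)
    (hF' : F' * F'.transpose = 1) :
    ∃ F : Matrix ιd ιn ℝ, F * F.transpose = 1 ∧ (∑ k, (F k j) ^ 2 = 0) ∧
      ∀ m : {m : ιn // m ≠ j}, ∑ k, (F k (↑m : ιn)) ^ 2 = ∑ k, (F' k m) ^ 2 := by
  classical
  set F : Matrix ιd ιn ℝ := Matrix.of fun k m =>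
      if hm : m = j then 0 else F' k ⟨m, hm⟩ with hFdef
  have hFj : ∀ k, F k j = 0 := fun k => dif_pos rfl
  have hFm : ∀ (k : ιd) (m : ιn) (hm : m ≠ j), F k m = F' k ⟨m, hm⟩ :=
    fun k m hm => dif_neg hm
  refine ⟨F, ?_, by simp [hFj], fun m => Finset.sum_congr rfl fun k _ => by
    rw [hFm k (↑m) m.prop]⟩
  ext k l
  rw [Matrix.mul_apply]
  simp only [Matrix.transpose_apply]
  rw [sum_split_one j (f := fun m => F k m * F l m), hFj k,
    Finset.sum_congr rfl fun (m : {m : ιn // m ≠ j}) _ => by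
      rw [hFm k (↑m) m.prop, hFm l (↑m) m.prop]]
  rw [zero_mul, zero_add]
  have h2 := congrFun (congrFun hF' k) l
  rw [Matrix.mul_apply] at h2
  simp only [Matrix.transpose_apply] at h2
  exact h2

lemma exists_frame : ∀ N : ℕ, ∀ (ιd ιn : Type) (_ : Fintype ιd) (_ : DecidableEq ιd)
    (_ : Fintype ιn) (_ : DecidableEq ιn),
    Fintype.card ιn = N → Fintype.card ιd ≤ N → ∀ r : ιn → ℝ,
    (∀ i, 0 < r i) → (∀ i, r i ≤ 1) → (∑ i, r i = (Fintype.card ιd : ℝ)) →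
    ∃ F : Matrix ιd ιn ℝ, F * F.transpose = 1 ∧ ∀ i, ∑ k, (F k i) ^ 2 = r i := by
  intro N
  induction N using Nat.strong_induction_on with
  | _ N IH =>
  intro ιd ιn _ _ _ _ hcardn hcardd r hrpos hrle hrsum
  rcases isEmpty_or_nonempty ιn with hempty | hne
  · haveI : IsEmpty ιd := Fintype.card_eq_zero_iff.mp
      (by have := Fintype.card_eq_zero (α := ιn); omega)
    exact ⟨0, Matrix.ext fun k => isEmptyElim k, fun i => isEmptyElim i⟩
  -- ιn nonempty, so N ≥ 1
  have hN1 : 1 ≤ N := hcardn ▸ Fintype.card_pos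
  by_cases h1 : ∃ j, r j = 1
  · -- case: some r j = 1; strip a row and a column
    obtain ⟨j, hj⟩ := h1
    have hd1 : 1 ≤ Fintype.card ιd := by
      have h := Finset.single_le_sum (f := r) (fun i _ => (hrpos i).le) (Finset.mem_univ j)
      rw [hj, hrsum] at h
      exact_mod_cast h
    obtain ⟨i₀⟩ := Fintype.card_pos_iff.mp hd1
    have hcard' : Fintype.card {m : ιn // m ≠ j} = N - 1 := by rw [card_ne, hcardn]
    have hcardd' : Fintype.card {k : ιd // k ≠ i₀} = Fintype.card ιd - 1 := card_ne i₀
    have hsum' : ∑ m : {m : ιn // m ≠ j}, r ↑m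
        = (Fintype.card {k : ιd // k ≠ i₀} : ℝ) := by
      have := sum_split_one j r
      rw [hrsum, hj] at this
      rw [hcardd']
      push_cast [Nat.cast_sub hd1]
      linarith
    obtain ⟨F', hF'1, hF'col⟩ := IH (N - 1) (by omega) {k : ιd // k ≠ i₀} {m : ιn // m ≠ j}
      inferInstance inferInstance inferInstance inferInstance hcard' (by omega)
      (fun m => r ↑m) (fun m => hrpos ↑m) (fun m => hrle ↑m) hsum'
    obtain ⟨F, hF1, hFj, hFm⟩ := extend_unit i₀ j F' hF'1
    refine ⟨F, hF1, fun m => ?_⟩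
    by_cases hm : m = j
    · rw [hm, hFj, hj]
    · rw [hFm ⟨m, hm⟩, hF'col ⟨m, hm⟩]
  -- case: all r i < 1
  push_neg at h1
  have hlt : ∀ i, r i < 1 := fun i => lt_of_le_of_ne (hrle i) (h1 i)
  have hd1 : 1 ≤ Fintype.card ιd := by
    have hpos : (0:ℝ) < ∑ i, r i :=
      Finset.sum_pos (fun i _ => hrpos i) Finset.univ_nonempty
    rw [hrsum] at hpos
    exact_mod_cast hpos
  have hdN : Fintype.card ιd < N := by
    have h2 : ∑ i, r i < ∑ _i : ιn, (1:ℝ) :=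
      Finset.sum_lt_sum_of_nonempty Finset.univ_nonempty fun i _ => hlt i
    rw [hrsum] at h2
    simp only [Finset.sum_const, Finset.card_univ, nsmul_eq_mul, mul_one] at h2
    exact_mod_cast hcardn ▸ h2
  have hN2 : 1 < Fintype.card ιn := by omega
  obtain ⟨i, j, hij⟩ := Fintype.exists_pair_of_one_lt_card hN2
  by_cases hab : r i + r j ≤ 1
  · -- merge columns i and j into i, drop j, then rotate back
    set r' : {m : ιn // m ≠ j} → ℝ :=
      fun m => if (↑m : ιn) = i then r i + r j else r ↑m with hr'def
    have hcard' : Fintype.card {m : ιn // m ≠ j} = N - 1 := by rw [card_ne, hcardn]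
    have hsum' : ∑ m : {m : ιn // m ≠ j}, r' m = (Fintype.card ιd : ℝ) := by
      have h3 := sum_split_one j (fun m => if m = i then r i + r j else r m)
      have h4 := sum_split_one i (fun m => if m = i then r i + r j else r m)
      have h5 := sum_split_one i r
      have e1 : ∀ m : {m : ιn // m ≠ j},
          r' m = if (↑m : ιn) = i then r i + r j else r ↑m := fun m => rfl
      rw [Finset.sum_congr rfl fun m _ => e1 m]
      have e2 : ∀ m : {m : ιn // m ≠ i},
          (if (↑m : ιn) = i then r i + r j else r ↑m) = r ↑m :=
        fun m => if_neg m.prop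
      rw [Finset.sum_congr rfl fun m _ => e2 m, if_pos rfl] at h4
      rw [if_neg (Ne.symm hij)] at h3
      rw [← hrsum]
      linarith
    obtain ⟨F', hF'1, hF'col⟩ := IH (N - 1) (by omega) ιd {m : ιn // m ≠ j}
      inferInstance inferInstance inferInstance inferInstance hcard' (by omega) r'
      (fun m => by
        by_cases hm : (↑m : ιn) = i
        · rw [hr'def]; simp only [if_pos hm]; linarith [hrpos i, hrpos j]
        · rw [hr'def]; simp only [if_neg hm]; exact hrpos _)
      (fun m => by
        by_cases hm : (↑m : ιn) = i
        · rw [hr'def]; simp only [if_pos hm]; exact hab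
        · rw [hr'def]; simp only [if_neg hm]; exact hrle _)
      hsum'
    obtain ⟨F'', hF''1, hF''j, hF''m⟩ := extend_zero j F' hF'1
    have hcoli : ∑ k, (F'' k i) ^ 2 = r i + r j := by
      rw [hF''m ⟨i, hij⟩, hF'col ⟨i, hij⟩, hr'def]
      simp
    obtain ⟨G, hG1, hGi, hGj, hGm⟩ := rotate_cols i j hij F'' hF''1 hcoli hF''j
      (hrpos i).le (by linarith [hrpos j])
    refine ⟨G, hG1, fun m => ?_⟩
    by_cases hmi : m = i
    · rw [hmi]; exact hGi
    by_cases hmj : m = j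
    · rw [hmj, hGj]; ring
    · rw [Finset.sum_congr rfl fun k _ => by rw [hGm m hmi hmj k]]
      rw [hF''m ⟨m, hmj⟩, hF'col ⟨m, hmj⟩, hr'def]
      simp [hmi]
  · -- r i + r j > 1 : make column i a unit vector, put excess on j, rotate back
    push_neg at hab
    obtain ⟨i₀⟩ := Fintype.card_pos_iff.mp hd1
    set r' : {m : ιn // m ≠ i} → ℝ :=
      fun m => if (↑m : ιn) = j then r i + r j - 1 else r ↑m with hr'def
    have hcard' : Fintype.card {m : ιn // m ≠ i} = N - 1 := by rw [card_ne, hcardn]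
    have hcardd' : Fintype.card {k : ιd // k ≠ i₀} = Fintype.card ιd - 1 := card_ne i₀
    have hsum' : ∑ m : {m : ιn // m ≠ i}, r' m
        = (Fintype.card {k : ιd // k ≠ i₀} : ℝ) := by
      have h3 := sum_split_one i (fun m => if m = j then r i + r j - 1 else r m)
      have h4 := sum_split_one j (fun m => if m = j then r i + r j - 1 else r m)
      have h5 := sum_split_one j r
      have e1 : ∀ m : {m : ιn // m ≠ i},
          r' m = if (↑m : ιn) = j then r i + r j - 1 else r ↑m := fun m => rfl
      rw [Finset.sum_congr rfl fun m _ => e1 m]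
      have e2 : ∀ m : {m : ιn // m ≠ j},
          (if (↑m : ιn) = j then r i + r j - 1 else r ↑m) = r ↑m :=
        fun m => if_neg m.prop
      rw [Finset.sum_congr rfl fun m _ => e2 m, if_pos rfl] at h4
      rw [if_neg hij] at h3
      rw [hcardd']
      push_cast [Nat.cast_sub hd1]
      rw [← hrsum]
      linarith
    obtain ⟨F', hF'1, hF'col⟩ := IH (N - 1) (by omega) {k : ιd // k ≠ i₀} {m : ιn // m ≠ i}
      inferInstance inferInstance inferInstance inferInstance hcard' (by omega) r'
      (fun m => by
        by_cases hm : (↑m : ιn) = j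
        · rw [hr'def]; simp only [if_pos hm]; linarith
        · rw [hr'def]; simp only [if_neg hm]; exact hrpos _)
      (fun m => by
        by_cases hm : (↑m : ιn) = j
        · rw [hr'def]; simp only [if_pos hm]; linarith [hrle i, hrle j]
        · rw [hr'def]; simp only [if_neg hm]; exact hrle _)
      hsum'
    obtain ⟨F'', hF''1, hF''i, hF''m⟩ := extend_unit i₀ i F' hF'1
    have hcolj : ∑ k, (F'' k j) ^ 2 = r i + r j - 1 := by
      rw [hF''m ⟨j, Ne.symm hij⟩, hF'col ⟨j, Ne.symm hij⟩, hr'def]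
      simp
    obtain ⟨G, hG1, hGi, hGj, hGm⟩ := rotate_cols i j hij F'' hF''1 hF''i hcolj
      (by linarith [hrle j]) (hrle i)
    refine ⟨G, hG1, fun m => ?_⟩
    by_cases hmi : m = i
    · rw [hmi]; exact hGi
    by_cases hmj : m = j
    · rw [hmj, hGj]; ring
    · rw [Finset.sum_congr rfl fun k _ => by rw [hGm m hmi hmj k]]
      rw [hF''m ⟨m, hmi⟩, hF'col ⟨m, hmi⟩, hr'def]
      simp [hmj]

/-- For `𝕂 = ℝ` or `ℂ`, the set of `d × n` Parseval frames with prescribed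
squared column norms `r` is nonempty iff `r` is admissible. -/
theorem stmt_0 (d n : ℕ) (hd : 1 ≤ d) (hdn : d ≤ n) (𝕂 : Type*) [RCLike 𝕂]
    (r : Fin n → ℝ) (hr : ∀ i, 0 < r i) :
    (∃ F : Matrix (Fin d) (Fin n) 𝕂,
        F * Fᴴ = 1 ∧ ∀ i, ∑ j, ‖F j i‖ ^ 2 = r i) ↔ AdmissibleR d n r := by
  constructor
  · rintro ⟨F, hF1, hcol⟩
    -- row sums are 1
    have hrow : ∀ j : Fin d, ∑ i, ‖F j i‖ ^ 2 = 1 := by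
      intro j
      have h := congrFun (congrFun hF1 j) j
      rw [Matrix.mul_apply] at h
      simp only [Matrix.conjTranspose_apply, RCLike.star_def, Matrix.one_apply_eq] at h
      have h2 : (((∑ i, ‖F j i‖ ^ 2 : ℝ)) : 𝕂) = 1 := by
        rw [RCLike.ofReal_sum]
        rw [← h]
        exact Finset.sum_congr rfl fun i _ => by
          rw [RCLike.mul_conj]; push_cast; ring
      exact_mod_cast h2
    have hsum : ∑ i, r i = (d : ℝ) := by
      rw [Finset.sum_congr rfl fun i (_ : i ∈ Finset.univ) => (hcol i).symm,
        Finset.sum_comm, Finset.sum_congr rfl fun j _ => hrow j]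
      simp
    -- each r i ≤ 1
    have hle : ∀ i, r i ≤ 1 := by
      intro i
      set G : Matrix (Fin n) (Fin n) 𝕂 := Fᴴ * F with hGdef
      have hGproj : G * G = G := by
        rw [hGdef, Matrix.mul_assoc, ← Matrix.mul_assoc F, hF1, Matrix.one_mul]
      have hGii : G i i = ((r i : ℝ) : 𝕂) := by
        rw [hGdef, Matrix.mul_apply, ← hcol i, RCLike.ofReal_sum]
        exact Finset.sum_congr rfl fun j _ => by
          simp only [Matrix.conjTranspose_apply, RCLike.star_def]
          rw [RCLike.conj_mul]; push_cast; ring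
      have hGherm : ∀ p q, G q p = (starRingEnd 𝕂) (G p q) := by
        intro p q
        rw [hGdef, Matrix.mul_apply, Matrix.mul_apply, map_sum]
        exact Finset.sum_congr rfl fun k _ => by
          simp only [Matrix.conjTranspose_apply, map_mul, RingHomCompTriple.comp_eq,
            RCLike.conj_conj]
          rw [mul_comm]
          simp
      have key : r i = ∑ j, ‖G i j‖ ^ 2 := by
        have h := congrFun (congrFun hGproj i) i
        rw [Matrix.mul_apply, hGii] at h
        have h2 : ∑ j, G i j * G j i = ((∑ j, ‖G i j‖ ^ 2 : ℝ) : 𝕂) := by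
          rw [RCLike.ofReal_sum]
          exact Finset.sum_congr rfl fun j _ => by
            rw [hGherm i j, RCLike.mul_conj]; push_cast; ring
        rw [h2] at h
        exact_mod_cast h.symm
      have hge : ‖G i i‖ ^ 2 ≤ ∑ j, ‖G i j‖ ^ 2 :=
        Finset.single_le_sum (f := fun j => ‖G i j‖ ^ 2)
          (fun j _ => by positivity) (Finset.mem_univ i)
      rw [hGii, RCLike.norm_ofReal, sq_abs] at hge
      nlinarith [hr i, key, hge]
    exact ⟨hsum, fun k _ _ I hI => by
      calc ∑ i ∈ I, r i ≤ ∑ _i ∈ I, (1:ℝ) := Finset.sum_le_sum fun i _ => hle i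
        _ = k := by simp [hI]⟩
  · rintro ⟨hsum, hineq⟩
    have hle : ∀ i, r i ≤ 1 := by
      intro i
      rcases eq_or_lt_of_le hd with hd1 | hd2
      · have h := Finset.single_le_sum (f := r) (fun m _ => (hr m).le) (Finset.mem_univ i)
        rw [hsum, ← hd1] at h
        exact_mod_cast h
      · have h := hineq 1 le_rfl (by omega) {i} (Finset.card_singleton i)
        simpa using h
    obtain ⟨Freal, hF1, hFcol⟩ := exists_frame n (Fin d) (Fin n)
      inferInstance inferInstance inferInstance inferInstance
      (Fintype.card_fin n) (by simp [hdn]) r hr hle (by simp [hsum])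
    refine ⟨Freal.map (algebraMap ℝ 𝕂), ?_, ?_⟩
    · ext k l
      have h := congrFun (congrFun hF1 k) l
      rw [Matrix.mul_apply] at h
      simp only [Matrix.transpose_apply] at h
      rw [Matrix.mul_apply]
      simp only [Matrix.conjTranspose_apply, Matrix.map_apply, RCLike.algebraMap_eq_ofReal,
        RCLike.star_def, RCLike.conj_ofReal]
      have h2 : ∑ m, ((Freal k m : ℝ) : 𝕂) * ((Freal l m : ℝ) : 𝕂)
          = ((∑ m, Freal k m * Freal l m : ℝ) : 𝕂) := by
        rw [RCLike.ofReal_sum]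
        exact Finset.sum_congr rfl fun m _ => by push_cast; ring
      rw [h2, h]
      by_cases hkl : k = l
      · rw [hkl]; simp
      · rw [Matrix.one_apply_ne hkl, Matrix.one_apply_ne hkl]; simp
    · intro i
      rw [← hFcol i]
      exact Finset.sum_congr rfl fun j _ => by
        simp [Matrix.map_apply, RCLike.algebraMap_eq_ofReal, RCLike.norm_ofReal, sq_abs]
end

section
/- Let 𝕂 be ℝ or ℂ and let r = (r_1,…,r_n) be a vector of positive reals. For every F ∈ 𝕂^{d×n}, the gradient of the total frame energy Φ_r with respect to the real Frobenius inner product is ∇Φ_r(F) = F·(4 F* F + diag(‖f_1‖²/r_1² − 1/r_1 − 4, …, ‖f_n‖²/r_n² − 1/r_n − 4)). -/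
open scoped BigOperators Matrix

attribute [local instance] Matrix.normedAddCommGroup Matrix.normedSpace

/-- The total frame energy. -/
noncomputable def totalFrameEnergy {d n : ℕ} {𝕂 : Type*} [RCLike 𝕂]
    (r : Fin n → ℝ) (F : Matrix (Fin d) (Fin n) 𝕂) : ℝ :=
  (∑ i, ∑ j, ‖(F * Fᴴ - 1 : Matrix (Fin d) (Fin d) 𝕂) i j‖ ^ 2) +
    (1 / 4) * ∑ i, ((∑ j, ‖F j i‖ ^ 2) / r i - 1) ^ 2

/-- The real Frobenius inner product `⟨X, Y⟩ = Re tr (Xᴴ Y)`, written entrywise. -/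
noncomputable def frobInner {d n : ℕ} {𝕂 : Type*} [RCLike 𝕂]
    (X Y : Matrix (Fin d) (Fin n) 𝕂) : ℝ :=
  ∑ i, ∑ j, RCLike.re ((starRingEnd 𝕂) (X i j) * Y i j)

/-- `G` is the gradient of `Φ` at `F` with respect to the real Frobenius inner product:
`Φ` is differentiable at `F` and its derivative is pairing with `G`. -/
noncomputable def IsFrobGradientAt {d n : ℕ} {𝕂 : Type*} [RCLike 𝕂]
    (Φ : Matrix (Fin d) (Fin n) 𝕂 → ℝ) (G F : Matrix (Fin d) (Fin n) 𝕂) : Prop :=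
  DifferentiableAt ℝ Φ F ∧ ∀ X, fderiv ℝ Φ F X = frobInner G X

/-! Both parts of `Φ_r` are built from squared Frobenius norms `‖g M‖²` of matrices depending
smoothly on `M`: of `M Mᴴ - 1`, and of the columns `M Eₖ` (with `Eₖ` the `k`-th diagonal unit),
the latter passed through the real functions `t ↦ (t / rₖ - 1)² / 4`. Since `‖·‖²` is the
quadratic form of the real bilinear map `frobInner`, the gradient of `M ↦ ‖g M‖²` at `F` is
`2 g'(F)* (g F)`, so everything reduces to computing two adjoints: for the Hermitian
`A = F Fᴴ - 1` one has `⟨A, F Xᴴ + X Fᴴ⟩ = 2 ⟨A F, X⟩`, and `⟨F Eₖ, X Eₖ⟩ = ⟨F Eₖ, X⟩`. -/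

open Matrix RCLike

section FrobeniusInner

variable {𝕂 : Type*} [RCLike 𝕂] {d n p : ℕ}

theorem frobInner_eq_re_trace (X Y : Matrix (Fin d) (Fin n) 𝕂) :
    frobInner X Y = re (Xᴴ * Y).trace := by
  simp only [frobInner, trace, diag, mul_apply, conjTranspose_apply, star_def, map_sum]
  exact Finset.sum_comm

theorem frobInner_add_left (G H X : Matrix (Fin d) (Fin n) 𝕂) :
    frobInner (G + H) X = frobInner G X + frobInner H X := by
  simp [frobInner_eq_re_trace, conjTranspose_add, Matrix.add_mul, trace_add]

theorem frobInner_add_right (G X Y : Matrix (Fin d) (Fin n) 𝕂) :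
    frobInner G (X + Y) = frobInner G X + frobInner G Y := by
  simp [frobInner_eq_re_trace, Matrix.mul_add, trace_add]

theorem frobInner_smul_left (c : ℝ) (G X : Matrix (Fin d) (Fin n) 𝕂) :
    frobInner (c • G) X = c * frobInner G X := by
  simp [frobInner_eq_re_trace, smul_re]

theorem frobInner_smul_right (c : ℝ) (G X : Matrix (Fin d) (Fin n) 𝕂) :
    frobInner G (c • X) = c * frobInner G X := by
  simp [frobInner_eq_re_trace, smul_re]

theorem frobInner_sum_left {ι : Type*} (s : Finset ι) (G : ι → Matrix (Fin d) (Fin n) 𝕂)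
    (X : Matrix (Fin d) (Fin n) 𝕂) :
    frobInner (∑ k ∈ s, G k) X = ∑ k ∈ s, frobInner (G k) X := by
  simp [frobInner_eq_re_trace, conjTranspose_sum, Matrix.sum_mul, trace_sum]

theorem frobInner_conjTranspose (X Y : Matrix (Fin d) (Fin n) 𝕂) :
    frobInner Xᴴ Yᴴ = frobInner X Y := by
  rw [frobInner_eq_re_trace, frobInner_eq_re_trace, ← conjTranspose_mul, trace_conjTranspose,
    star_def, conj_re, trace_mul_comm]

theorem frobInner_mul_conjTranspose_right (A : Matrix (Fin d) (Fin p) 𝕂)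
    (X : Matrix (Fin d) (Fin n) 𝕂) (B : Matrix (Fin p) (Fin n) 𝕂) :
    frobInner A (X * Bᴴ) = frobInner (A * B) X := by
  rw [frobInner_eq_re_trace, frobInner_eq_re_trace, conjTranspose_mul, ← Matrix.mul_assoc,
    trace_mul_comm, Matrix.mul_assoc]

theorem frobInner_comm (X Y : Matrix (Fin d) (Fin n) 𝕂) : frobInner X Y = frobInner Y X := by
  refine Finset.sum_congr rfl fun i _ => Finset.sum_congr rfl fun j _ => ?_
  rw [← conj_re, map_mul, conj_conj, mul_comm]

theorem frobInner_self (X : Matrix (Fin d) (Fin n) 𝕂) :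
    frobInner X X = ∑ i, ∑ j, ‖X i j‖ ^ 2 := by
  simp [frobInner, ← normSq_eq_def', normSq_apply]

theorem isBilinearMap_frobInner :
    IsBilinearMap ℝ (frobInner : Matrix (Fin d) (Fin n) 𝕂 → _ → ℝ) where
  add_left := frobInner_add_left
  smul_left := frobInner_smul_left
  add_right := frobInner_add_right
  smul_right := frobInner_smul_right

end FrobeniusInner

section GradientCalculus

variable {𝕂 : Type*} [RCLike 𝕂] {d n : ℕ} {Φ Ψ : Matrix (Fin d) (Fin n) 𝕂 → ℝ}
  {G H F : Matrix (Fin d) (Fin n) 𝕂}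

/- `HasFDerivAt` lemmas produce derivatives whose types carry the normed instances on matrices,
while `fderiv` in `IsFrobGradientAt` is elaborated with the algebraic ones; these agree only up to
unfolding `Matrix.normedAddCommGroup`, so the calculus below goes through this existential form
and evaluates derivatives by `rfl` and `map_sum` rather than by `simp`. -/
theorem isFrobGradientAt_iff :
    IsFrobGradientAt Φ G F ↔ ∃ L, HasFDerivAt (𝕜 := ℝ) Φ L F ∧ ∀ X, L X = frobInner G X :=
  ⟨fun h => ⟨fderiv ℝ Φ F, h.1.hasFDerivAt, h.2⟩,
    fun ⟨_, h, hL⟩ => ⟨h.differentiableAt, fun X => by rw [h.fderiv, hL]⟩⟩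

theorem IsFrobGradientAt.add (hΦ : IsFrobGradientAt Φ G F) (hΨ : IsFrobGradientAt Ψ H F) :
    IsFrobGradientAt (fun M => Φ M + Ψ M) (G + H) F := by
  obtain ⟨L₁, h₁, hL₁⟩ := isFrobGradientAt_iff.1 hΦ
  obtain ⟨L₂, h₂, hL₂⟩ := isFrobGradientAt_iff.1 hΨ
  refine isFrobGradientAt_iff.2 ⟨_, h₁.add h₂, fun X => ?_⟩
  rw [frobInner_add_left, ← hL₁, ← hL₂]
  rfl

theorem IsFrobGradientAt.sum {ι : Type*} [Fintype ι] {Φ : ι → Matrix (Fin d) (Fin n) 𝕂 → ℝ}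
    {G : ι → Matrix (Fin d) (Fin n) 𝕂} (h : ∀ k, IsFrobGradientAt (Φ k) (G k) F) :
    IsFrobGradientAt (fun M => ∑ k, Φ k M) (∑ k, G k) F := by
  choose L hL hL_apply using fun k => isFrobGradientAt_iff.1 (h k)
  refine isFrobGradientAt_iff.2 ⟨_, HasFDerivAt.fun_sum fun k _ => hL k, fun X => ?_⟩
  rw [frobInner_sum_left]
  exact (map_sum (ContinuousLinearMap.apply ℝ ℝ X) _ _).trans
    (Finset.sum_congr rfl fun k _ => hL_apply k X)

theorem IsFrobGradientAt.comp_hasDerivAt {f : ℝ → ℝ} {f' : ℝ} (hf : HasDerivAt f f' (Φ F))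
    (hΦ : IsFrobGradientAt Φ G F) : IsFrobGradientAt (fun M => f (Φ M)) (f' • G) F := by
  obtain ⟨L, h, hL⟩ := isFrobGradientAt_iff.1 hΦ
  refine isFrobGradientAt_iff.2 ⟨_, hf.hasFDerivAt.comp F h, fun X => ?_⟩
  rw [frobInner_smul_left, ← hL]
  exact mul_comm _ _

theorem isFrobGradientAt_sum_norm_sq {p q : ℕ}
    {g : Matrix (Fin d) (Fin n) 𝕂 → Matrix (Fin p) (Fin q) 𝕂} {g'}
    (hg : HasFDerivAt (𝕜 := ℝ) g g' F)
    (hG : ∀ X, frobInner (g F) (g' X) = frobInner G X) :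
    IsFrobGradientAt (fun M => ∑ i, ∑ j, ‖g M i j‖ ^ 2) ((2 : ℝ) • G) F := by
  simp_rw [← frobInner_self]
  let B : Matrix (Fin p) (Fin q) 𝕂 →L[ℝ] Matrix (Fin p) (Fin q) 𝕂 →L[ℝ] ℝ :=
    isBilinearMap_frobInner.toContinuousBilinearMap
  refine isFrobGradientAt_iff.2 ⟨_, B.hasFDerivAt_of_bilinear hg hg, fun X => ?_⟩
  change frobInner (g F) (g' X) + frobInner (g' X) (g F) = _
  rw [frobInner_comm (g' X), ← two_mul, hG, frobInner_smul_left]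

end GradientCalculus

section FrameEnergy

variable {𝕂 : Type*} [RCLike 𝕂] {d n : ℕ}

theorem isBilinearMap_mul_conjTranspose {m p : ℕ} :
    IsBilinearMap ℝ
      fun (A : Matrix (Fin m) (Fin n) 𝕂) (B : Matrix (Fin p) (Fin n) 𝕂) => A * Bᴴ where
  add_left _ _ _ := Matrix.add_mul ..
  smul_left c A B := Matrix.smul_mul c A Bᴴ
  add_right A B C := by simp [conjTranspose_add, Matrix.mul_add]
  smul_right c A B := by simp

theorem hasFDerivAt_mul_conjTranspose_self (F : Matrix (Fin d) (Fin n) 𝕂) :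
    ∃ L, HasFDerivAt (𝕜 := ℝ) (fun M : Matrix (Fin d) (Fin n) 𝕂 => M * Mᴴ) L F ∧
      ∀ X, L X = F * Xᴴ + X * Fᴴ := by
  let B : Matrix (Fin d) (Fin n) 𝕂 →L[ℝ] Matrix (Fin d) (Fin n) 𝕂 →L[ℝ]
      Matrix (Fin d) (Fin d) 𝕂 :=
    isBilinearMap_mul_conjTranspose.toContinuousBilinearMap
  exact ⟨_, B.hasFDerivAt_of_bilinear (hasFDerivAt_id F) (hasFDerivAt_id F), fun _ => rfl⟩

theorem hasFDerivAt_mul_conjTranspose_const {p : ℕ} (F : Matrix (Fin d) (Fin n) 𝕂)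
    (C : Matrix (Fin p) (Fin n) 𝕂) :
    ∃ L, HasFDerivAt (𝕜 := ℝ) (fun M : Matrix (Fin d) (Fin n) 𝕂 => M * Cᴴ) L F ∧
      ∀ X, L X = X * Cᴴ := by
  let B : Matrix (Fin d) (Fin n) 𝕂 →L[ℝ] Matrix (Fin p) (Fin n) 𝕂 →L[ℝ]
      Matrix (Fin d) (Fin p) 𝕂 :=
    isBilinearMap_mul_conjTranspose.toContinuousBilinearMap
  exact ⟨_, (B.flip C).hasFDerivAt, fun _ => rfl⟩

theorem isFrobGradientAt_frameDefect (F : Matrix (Fin d) (Fin n) 𝕂) :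
    IsFrobGradientAt
      (fun M : Matrix (Fin d) (Fin n) 𝕂 =>
        ∑ i, ∑ j, ‖(M * Mᴴ - 1 : Matrix (Fin d) (Fin d) 𝕂) i j‖ ^ 2)
      ((4 : ℝ) • ((F * Fᴴ - 1) * F)) F := by
  obtain ⟨L, hL, hL_apply⟩ := hasFDerivAt_mul_conjTranspose_self F
  have hA : (F * Fᴴ - 1)ᴴ = F * Fᴴ - 1 :=
    (isHermitian_mul_conjTranspose_self F).sub isHermitian_one
  have h := isFrobGradientAt_sum_norm_sq (hL.sub_const 1) (G := (2 : ℝ) • ((F * Fᴴ - 1) * F))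
    fun X => by
      have hsymm : frobInner (F * Fᴴ - 1) (F * Xᴴ) = frobInner (F * Fᴴ - 1) (X * Fᴴ) := by
        rw [← frobInner_conjTranspose, hA, conjTranspose_mul, conjTranspose_conjTranspose]
      rw [hL_apply, frobInner_add_right, hsymm, frobInner_mul_conjTranspose_right,
        frobInner_smul_left]
      ring
  rwa [smul_smul, show (2 : ℝ) * 2 = 4 by norm_num] at h

theorem isFrobGradientAt_sum_norm_sq_col (k : Fin n) (F : Matrix (Fin d) (Fin n) 𝕂) :
    IsFrobGradientAt (fun M : Matrix (Fin d) (Fin n) 𝕂 => ∑ j, ‖M j k‖ ^ 2)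
      ((2 : ℝ) • (F * diagonal (Pi.single k (1 : 𝕂)))) F := by
  set E : Matrix (Fin n) (Fin n) 𝕂 := diagonal (Pi.single k 1)
  have hE : Eᴴ = E := by simp [E, diagonal_conjTranspose]
  have hEE : E * E = E := by
    rw [diagonal_mul_diagonal]
    congr 1
    ext i
    by_cases hi : i = k <;> simp [hi]
  obtain ⟨L, hL, hL_apply⟩ := hasFDerivAt_mul_conjTranspose_const F E
  have h := isFrobGradientAt_sum_norm_sq hL (G := F * E) fun X => by
    rw [hL_apply, frobInner_mul_conjTranspose_right, hE, Matrix.mul_assoc, hEE]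
  have hfun : (fun M : Matrix (Fin d) (Fin n) 𝕂 => ∑ i, ∑ j, ‖(M * Eᴴ) i j‖ ^ 2) =
      fun M => ∑ j, ‖M j k‖ ^ 2 := by
    funext M
    simp [hE, E, mul_diagonal, Pi.single_apply, apply_ite (fun x : 𝕂 => ‖x‖ ^ 2)]
  rwa [hfun] at h

theorem sum_smul_mul_diagonal_single (F : Matrix (Fin d) (Fin n) 𝕂) (c : Fin n → ℝ) :
    ∑ k, c k • (F * diagonal (Pi.single k (1 : 𝕂))) =
      F * diagonal fun k => algebraMap ℝ 𝕂 (c k) := by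
  ext i l
  simp [Matrix.sum_apply, mul_diagonal, Pi.single_apply, Algebra.smul_def, mul_comm]

theorem isFrobGradientAt_columnPenalty (r : Fin n → ℝ) (F : Matrix (Fin d) (Fin n) 𝕂) :
    IsFrobGradientAt
      (fun M : Matrix (Fin d) (Fin n) 𝕂 => 1 / 4 * ∑ k, ((∑ j, ‖M j k‖ ^ 2) / r k - 1) ^ 2)
      (F * diagonal fun k => algebraMap ℝ 𝕂 ((∑ j, ‖F j k‖ ^ 2) / r k ^ 2 - 1 / r k)) F := by
  have hk (k : Fin n) : IsFrobGradientAt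
      (fun M : Matrix (Fin d) (Fin n) 𝕂 => 1 / 4 * ((∑ j, ‖M j k‖ ^ 2) / r k - 1) ^ 2)
      (((∑ j, ‖F j k‖ ^ 2) / r k ^ 2 - 1 / r k) • (F * diagonal (Pi.single k (1 : 𝕂)))) F := by
    have hf : HasDerivAt (fun t => 1 / 4 * (t / r k - 1) ^ 2)
        (((∑ j, ‖F j k‖ ^ 2) / r k ^ 2 - 1 / r k) / 2) (∑ j, ‖F j k‖ ^ 2) :=
      ((((hasDerivAt_id _).div_const (r k)).sub_const 1).pow 2 |>.const_mul (1 / 4)).congr_deriv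
        (by simp; ring)
    have h := (isFrobGradientAt_sum_norm_sq_col k F).comp_hasDerivAt hf
    rwa [smul_smul, div_mul_cancel₀ _ two_ne_zero] at h
  have h := IsFrobGradientAt.sum hk
  rw [sum_smul_mul_diagonal_single] at h
  simpa only [Finset.mul_sum] using h

theorem frameEnergy_gradient_eq (F : Matrix (Fin d) (Fin n) 𝕂) (c : Fin n → ℝ) :
    (4 : ℝ) • ((F * Fᴴ - 1) * F) + F * diagonal (fun k => algebraMap ℝ 𝕂 (c k)) =
      F * ((4 : ℕ) • (Fᴴ * F) + diagonal fun k => algebraMap ℝ 𝕂 (c k - 4)) := by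
  have hdiag : diagonal (fun k => algebraMap ℝ 𝕂 (c k - 4)) =
      diagonal (fun k => algebraMap ℝ 𝕂 (c k)) - (4 : ℝ) • (1 : Matrix (Fin n) (Fin n) 𝕂) := by
    ext i j
    by_cases h : i = j <;> simp [one_apply, h, Algebra.algebraMap_eq_smul_one, sub_smul]
  rw [hdiag]
  simp only [Matrix.mul_add, Matrix.mul_sub, Matrix.sub_mul, Matrix.mul_smul,
    Matrix.mul_assoc, Matrix.mul_one, Matrix.one_mul]
  module

end FrameEnergy

theorem stmt_2_general (d n : ℕ) (𝕂 : Type*) [RCLike 𝕂]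
    (r : Fin n → ℝ) (F : Matrix (Fin d) (Fin n) 𝕂) :
    IsFrobGradientAt (totalFrameEnergy r)
      (F * ((4 : ℕ) • (Fᴴ * F) +
        Matrix.diagonal fun i =>
          algebraMap ℝ 𝕂 ((∑ j, ‖F j i‖ ^ 2) / r i ^ 2 - 1 / r i - 4))) F := by
  have h := (isFrobGradientAt_frameDefect F).add (isFrobGradientAt_columnPenalty r F)
  rwa [frameEnergy_gradient_eq] at h

/-- the gradient of the total frame energy is
`∇Φ_r(F) = F (4 Fᴴ F + diag(‖fᵢ‖²/rᵢ² − 1/rᵢ − 4))`. -/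
theorem stmt_2 (d n : ℕ) (hd : 1 ≤ d) (hdn : d ≤ n) (𝕂 : Type*) [RCLike 𝕂]
    (r : Fin n → ℝ) (hr : ∀ i, 0 < r i) (F : Matrix (Fin d) (Fin n) 𝕂) :
    IsFrobGradientAt (totalFrameEnergy r)
      (F * ((4 : ℕ) • (Fᴴ * F) +
        Matrix.diagonal fun i =>
          algebraMap ℝ 𝕂 ((∑ j, ‖F j i‖ ^ 2) / r i ^ 2 - 1 / r i - 4))) F :=
  stmt_2_general d n 𝕂 r F
end

section
/- Let 𝕂 be ℝ or ℂ and let r = (r_1,…,r_n) be a vector of positive reals. The zero matrix is a local maximum of the total frame energy Φ_r: there exists ε > 0 such that Φ_r(F) ≤ Φ_r(0) for all F ∈ 𝕂^{d×n} with ‖F‖_Fr < ε. -/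
open scoped BigOperators Matrix

/-- The Frobenius norm of a matrix. -/
noncomputable def frobNorm {d n : ℕ} {𝕂 : Type*} [RCLike 𝕂]
    (F : Matrix (Fin d) (Fin n) 𝕂) : ℝ :=
  Real.sqrt (∑ i, ∑ j, ‖F i j‖ ^ 2)

/-- the zero matrix is a local maximum of the total frame energy. -/
theorem stmt_3 (d n : ℕ) (hd : 1 ≤ d) (hdn : d ≤ n) (𝕂 : Type*) [RCLike 𝕂]
    (r : Fin n → ℝ) (hr : ∀ i, 0 < r i) :
    ∃ ε : ℝ, 0 < ε ∧ ∀ F : Matrix (Fin d) (Fin n) 𝕂,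
      frobNorm F < ε → totalFrameEnergy r F ≤ totalFrameEnergy r (0 : Matrix (Fin d) (Fin n) 𝕂) := by
  haveI : Nonempty (Fin n) := Fin.pos_iff_nonempty.mp (lt_of_lt_of_le hd hdn)
  set rm : ℝ := Finset.univ.inf' Finset.univ_nonempty r with hrm
  have hrm0 : 0 < rm := by
    rw [hrm, Finset.lt_inf'_iff]
    exact fun i _ => hr i
  have hrmle : ∀ j, rm ≤ r j := fun j =>
    Finset.inf'_le _ (Finset.mem_univ j)
  set m : ℝ := min 2 (2 * rm) with hmdef
  have hm0 : 0 < m := lt_min two_pos (by linarith)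
  refine ⟨Real.sqrt m, Real.sqrt_pos.mpr hm0, fun F hF => ?_⟩
  set t : ℝ := ∑ i, ∑ j, ‖F i j‖ ^ 2 with htdef
  have ht0 : 0 ≤ t := by positivity
  have htm : t < m := by
    by_contra h
    push_neg at h
    exact absurd hF (not_lt.mpr (Real.sqrt_le_sqrt h))
  have ht2 : t < 2 := lt_of_lt_of_le htm (min_le_left _ _)
  -- value at 0
  have h0 : totalFrameEnergy r (0 : Matrix (Fin d) (Fin n) 𝕂) = d + (1 / 4) * n := by
    have h1 : ∀ i j : Fin d,
        ‖((0 : Matrix (Fin d) (Fin n) 𝕂) * (0 : Matrix (Fin d) (Fin n) 𝕂)ᴴ - 1 :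
          Matrix (Fin d) (Fin d) 𝕂) i j‖ ^ 2
          = if i = j then 1 else 0 := by
      intro i j
      simp [Matrix.sub_apply, Matrix.one_apply]
      split <;> simp
    have h2 : ∀ i : Fin n,
        ((∑ j, ‖(0 : Matrix (Fin d) (Fin n) 𝕂) j i‖ ^ 2) / r i - 1) ^ 2 = 1 := by
      intro i; simp
    simp only [totalFrameEnergy, h1, h2]
    simp [Finset.sum_ite_eq']
  rw [h0]
  -- row norms
  set a : Fin d → ℝ := fun i => ∑ k, ‖F i k‖ ^ 2 with hadef
  have ha0 : ∀ i, 0 ≤ a i := fun i => by positivity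
  have hta : t = ∑ i, a i := rfl
  -- entries of the Gram matrix
  have hG : ∀ i j, (F * Fᴴ) i j = ∑ k, F i k * (starRingEnd 𝕂) (F j k) := by
    intro i j
    simp [Matrix.mul_apply, Matrix.conjTranspose_apply]
  -- diagonal
  have hdiag : ∀ i, ‖(F * Fᴴ - 1 : Matrix (Fin d) (Fin d) 𝕂) i i‖ ^ 2 = (a i - 1) ^ 2 := by
    intro i
    have : (F * Fᴴ) i i = ((a i : ℝ) : 𝕂) := by
      rw [hG]
      simp only [hadef]
      push_cast
      exact Finset.sum_congr rfl fun k _ => RCLike.mul_conj (F i k)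
    rw [Matrix.sub_apply, this, Matrix.one_apply_eq]
    rw [show ((a i : ℝ) : 𝕂) - 1 = ((a i - 1 : ℝ) : 𝕂) by push_cast; ring]
    rw [RCLike.norm_ofReal, sq_abs]
  -- off-diagonal Cauchy-Schwarz
  have hoff : ∀ i j, i ≠ j →
      ‖(F * Fᴴ - 1 : Matrix (Fin d) (Fin d) 𝕂) i j‖ ^ 2 ≤ a i * a j := by
    intro i j hij
    rw [Matrix.sub_apply, Matrix.one_apply_ne hij, sub_zero, hG]
    calc ‖∑ k, F i k * (starRingEnd 𝕂) (F j k)‖ ^ 2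
        ≤ (∑ k, ‖F i k‖ * ‖F j k‖) ^ 2 := by
          apply pow_le_pow_left₀ (norm_nonneg _)
          refine (norm_sum_le _ _).trans (le_of_eq ?_)
          exact Finset.sum_congr rfl fun k _ => by rw [norm_mul, RCLike.norm_conj]
      _ ≤ (∑ k, ‖F i k‖ ^ 2) * ∑ k, ‖F j k‖ ^ 2 :=
          Finset.sum_mul_sq_le_sq_mul_sq _ _ _
      _ = a i * a j := rfl
  -- bound the first term
  have hterm1 : (∑ i, ∑ j, ‖(F * Fᴴ - 1 : Matrix (Fin d) (Fin d) 𝕂) i j‖ ^ 2)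
      ≤ (d : ℝ) := by
    have hb : ∀ i j, ‖(F * Fᴴ - 1 : Matrix (Fin d) (Fin d) 𝕂) i j‖ ^ 2
        ≤ a i * a j + (if i = j then 1 - 2 * a i else 0) := by
      intro i j
      by_cases h : i = j
      · subst h
        rw [hdiag, if_pos rfl]
        nlinarith [ha0 i]
      · rw [if_neg h]
        simpa using hoff i j h
    calc (∑ i, ∑ j, ‖(F * Fᴴ - 1 : Matrix (Fin d) (Fin d) 𝕂) i j‖ ^ 2)
        ≤ ∑ i, ∑ j, (a i * a j + (if i = j then 1 - 2 * a i else 0)) :=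
          Finset.sum_le_sum fun i _ => Finset.sum_le_sum fun j _ => hb i j
      _ = t * t - 2 * t + d := by
          simp only [Finset.sum_add_distrib, Finset.sum_ite_eq, Finset.mem_univ, if_pos]
          rw [← Finset.sum_mul_sum]
          rw [Finset.sum_sub_distrib]
          simp [hta, Finset.mul_sum, Finset.sum_sub_distrib]
          ring
      _ ≤ (d : ℝ) := by nlinarith
  -- bound the second term
  have hterm2 : (∑ i, ((∑ j, ‖F j i‖ ^ 2) / r i - 1) ^ 2) ≤ (n : ℝ) := by
    have hcol : ∀ i : Fin n, ((∑ j, ‖F j i‖ ^ 2) / r i - 1) ^ 2 ≤ 1 := by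
      intro i
      set s : ℝ := ∑ j, ‖F j i‖ ^ 2 with hsdef
      have hs0 : 0 ≤ s := by positivity
      have hst : s ≤ t := by
        rw [htdef, Finset.sum_comm]
        exact Finset.single_le_sum (f := fun i' => ∑ j, ‖F j i'‖ ^ 2)
          (fun i' _ => by positivity) (Finset.mem_univ i)
      have hs2r : s < 2 * r i := by
        have : m ≤ 2 * r i := (min_le_right _ _).trans (by nlinarith [hrmle i])
        linarith
      have hq : s / r i < 2 := (div_lt_iff₀ (hr i)).mpr (by linarith)
      have hq0 : 0 ≤ s / r i := div_nonneg hs0 (hr i).le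
      nlinarith
    calc (∑ i, ((∑ j, ‖F j i‖ ^ 2) / r i - 1) ^ 2) ≤ ∑ _i : Fin n, (1 : ℝ) :=
          Finset.sum_le_sum fun i _ => hcol i
      _ = n := by simp
  unfold totalFrameEnergy
  have : (1 : ℝ) / 4 * ∑ i, ((∑ j, ‖F j i‖ ^ 2) / r i - 1) ^ 2 ≤ 1 / 4 * n := by
    linarith
  linarith
end
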